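/- arXiv:1202.3083 — 4 statements merged into one kernel-verified Lean document; each statement's English description precedes it below -/
import Mathlib

section
/- Define $\phi:(0,1)\times(-1,1)\to\mathbb{R}$ by $\phi(z,t)=-\mathrm{sgn}(t)\sqrt{|t|}$. Then $\phi$ is a continuous distributional solution of $\partial_z\phi+\partial_t(\phi^2/2)=w$ where $w(z,t)=\tfrac{1}{2}\mathrm{sgn}(t)$. -/
open Set Real MeasureTheory

lemma measurable_realSign : Measurable Real.sign := by
  have h : Real.sign = fun r : ℝ => if r < 0 then (-1 : ℝ) else if 0 < r then 1 else 0 := rfl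
  rw [h]
  exact Measurable.ite (measurableSet_lt measurable_id measurable_const) measurable_const
    (Measurable.ite (measurableSet_lt measurable_const measurable_id) measurable_const
      measurable_const)

lemma abs_realSign (t : ℝ) : |Real.sign t| ≤ 1 := by
  rcases Real.sign_apply_eq t with h | h | h <;> rw [h] <;> norm_num

lemma phi_eq (t : ℝ) : -Real.sign t * Real.sqrt |t| = Real.sqrt (-t) - Real.sqrt t := by
  rcases lt_trichotomy t 0 with h | rfl | h
  · rw [Real.sign_of_neg h, abs_of_neg h, Real.sqrt_eq_zero_of_nonpos h.le]; ring
  · simp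
  · rw [Real.sign_of_pos h, abs_of_pos h, Real.sqrt_eq_zero_of_nonpos (show -t ≤ 0 by linarith)]; ring

lemma phi_sq (t : ℝ) : (-Real.sign t * Real.sqrt |t|) ^ 2 = |t| := by
  rcases eq_or_ne t 0 with rfl | h
  · simp
  · rcases Real.sign_apply_eq_of_ne_zero t h with hs | hs <;> rw [hs] <;>
      · rw [mul_pow, Real.sq_sqrt (abs_nonneg t)]; norm_num

lemma integral_deriv_zero (g g' : ℝ → ℝ) (R : ℝ) (hR : 0 < R)
    (hg : ∀ t, HasDerivAt g (g' t) t) (hg' : Continuous g')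
    (h0 : ∀ t, R ≤ |t| → g t = 0) (h0' : ∀ t, R ≤ |t| → g' t = 0) :
    (∫ t, g' t) = 0 := by
  have habs : ∀ t : ℝ, t ∉ Ioc (-R) R → R ≤ |t| := by
    intro t ht
    rcases le_or_gt t (-R) with h | h
    · rw [abs_of_nonpos (by linarith)]; linarith
    · rcases le_or_gt t R with h2 | h2
      · exact absurd ⟨h, h2⟩ ht
      · rw [abs_of_pos (by linarith)]; linarith
  rw [← setIntegral_eq_integral_of_forall_compl_eq_zero
      (s := Ioc (-R) R) (fun t ht => h0' t (habs t ht)),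
    ← intervalIntegral.integral_of_le (by linarith : -R ≤ R),
    intervalIntegral.integral_eq_sub_of_hasDerivAt (fun x _ => hg x)
      (hg'.intervalIntegrable _ _),
    h0 R (le_abs_self R), h0 (-R) (by rw [abs_neg]; exact le_abs_self R), sub_zero]

lemma ibp_abs (g g' : ℝ → ℝ) (R : ℝ) (hR : 0 < R)
    (hg : ∀ t, HasDerivAt g (g' t) t) (hgc : Continuous g) (hg' : Continuous g')
    (h0 : ∀ t, R ≤ |t| → g t = 0) (h0' : ∀ t, R ≤ |t| → g' t = 0) :
    (∫ t, |t| / 2 * g' t) = -∫ t, Real.sign t / 2 * g t := by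
  have habs : ∀ t : ℝ, t ∉ Ioc (-R) R → R ≤ |t| := by
    intro t ht
    rcases le_or_gt t (-R) with h | h
    · rw [abs_of_nonpos (by linarith)]; linarith
    · rcases le_or_gt t R with h2 | h2
      · exact absurd ⟨h, h2⟩ ht
      · rw [abs_of_pos (by linarith)]; linarith
  have hgR : g R = 0 := h0 R (le_abs_self R)
  have hgmR : g (-R) = 0 := h0 (-R) (by rw [abs_neg]; exact le_abs_self R)
  have hcint : ∀ a b : ℝ, IntervalIntegrable (fun t => |t| / 2 * g' t) volume a b :=
    fun a b => ((continuous_abs.div_const 2).mul hg').intervalIntegrable a b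
  -- positive-side IBP
  have hApos : (∫ t in (0:ℝ)..R, |t| / 2 * g' t) = -∫ t in (0:ℝ)..R, 1 / 2 * g t := by
    rw [intervalIntegral.integral_congr (g := fun t => t / 2 * g' t)
      (fun t ht => by
        rw [uIcc_of_le hR.le] at ht
        simp only [abs_of_nonneg ht.1]),
      intervalIntegral.integral_mul_deriv_eq_deriv_mul
        (u := fun t => t / 2) (u' := fun _ => 1 / 2) (v := g) (v' := g')
        (fun x _ => (hasDerivAt_id x).div_const 2) (fun x _ => hg x)
        intervalIntegrable_const (hg'.intervalIntegrable _ _), hgR]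
    ring
  -- negative-side IBP
  have hAneg : (∫ t in (-R:ℝ)..0, |t| / 2 * g' t) = ∫ t in (-R:ℝ)..0, 1 / 2 * g t := by
    rw [intervalIntegral.integral_congr (g := fun t => -t / 2 * g' t)
      (fun t ht => by
        rw [uIcc_of_le (by linarith : (-R:ℝ) ≤ 0)] at ht
        simp only [abs_of_nonpos ht.2]),
      intervalIntegral.integral_mul_deriv_eq_deriv_mul
        (u := fun t => -t / 2) (u' := fun _ => -1 / 2) (v := g) (v' := g')
        (fun x _ => ((hasDerivAt_id x).neg.div_const 2)) (fun x _ => hg x)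
        intervalIntegrable_const (hg'.intervalIntegrable _ _), hgmR]
    have : (∫ x in (-R:ℝ)..0, -1 / 2 * g x) = -∫ x in (-R:ℝ)..0, 1 / 2 * g x := by
      rw [← intervalIntegral.integral_neg]
      apply intervalIntegral.integral_congr
      intro t _; ring
    rw [this]; ring
  -- whole-line LHS to interval
  have hL : (∫ t, |t| / 2 * g' t) = ∫ t in (-R:ℝ)..R, |t| / 2 * g' t := by
    rw [← setIntegral_eq_integral_of_forall_compl_eq_zero (s := Ioc (-R) R)
        (fun t ht => by rw [h0' t (habs t ht), mul_zero]),
      ← intervalIntegral.integral_of_le (by linarith : -R ≤ R)]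
  have hLsplit : (∫ t in (-R:ℝ)..R, |t| / 2 * g' t)
      = (∫ t in (-R:ℝ)..0, |t| / 2 * g' t) + ∫ t in (0:ℝ)..R, |t| / 2 * g' t :=
    (intervalIntegral.integral_add_adjacent_intervals (hcint _ _) (hcint _ _)).symm
  -- RHS manipulation
  have hgint : Integrable g := by
    apply hgc.integrable_of_hasCompactSupport
    apply HasCompactSupport.intro (isCompact_Icc (a := -R) (b := R))
    intro x hx
    apply h0
    apply habs
    intro hmem
    exact hx ⟨hmem.1.le, hmem.2⟩
  have hsint : Integrable (fun t => Real.sign t / 2 * g t) := by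
    apply hgint.bdd_mul (c := 1) ((measurable_realSign.div_const 2).aestronglyMeasurable)
    exact Filter.Eventually.of_forall (fun x => by
      rw [Real.norm_eq_abs, abs_div, abs_two]
      have := abs_realSign x
      linarith [abs_nonneg (Real.sign x)])
  have hRfull : (∫ t, Real.sign t / 2 * g t) = ∫ t in Ioc (-R) R, Real.sign t / 2 * g t :=
    (setIntegral_eq_integral_of_forall_compl_eq_zero
      (fun t ht => by rw [h0 t (habs t ht), mul_zero])).symm
  have hRsplit : (∫ t in Ioc (-R) R, Real.sign t / 2 * g t)
      = (∫ t in Ioc (-R) (0:ℝ), Real.sign t / 2 * g t)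
        + ∫ t in Ioc (0:ℝ) R, Real.sign t / 2 * g t := by
    rw [← Ioc_union_Ioc_eq_Ioc (by linarith : (-R:ℝ) ≤ 0) hR.le,
      setIntegral_union (Ioc_disjoint_Ioc_of_le le_rfl) measurableSet_Ioc
        hsint.integrableOn hsint.integrableOn]
  have hpos : (∫ t in Ioc (0:ℝ) R, Real.sign t / 2 * g t) = ∫ t in (0:ℝ)..R, 1 / 2 * g t := by
    rw [setIntegral_congr_fun measurableSet_Ioc
        (fun t ht => by rw [Real.sign_of_pos ht.1]),
      intervalIntegral.integral_of_le hR.le]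
  have hneg : (∫ t in Ioc (-R) (0:ℝ), Real.sign t / 2 * g t)
      = -∫ t in (-R:ℝ)..0, 1 / 2 * g t := by
    rw [integral_Ioc_eq_integral_Ioo,
      setIntegral_congr_fun measurableSet_Ioo
        (fun t ht => show Real.sign t / 2 * g t = -(1 / 2 * g t) by
          rw [Real.sign_of_neg ht.2]; ring),
      integral_neg, ← integral_Ioc_eq_integral_Ioo,
      ← intervalIntegral.integral_of_le (by linarith : (-R:ℝ) ≤ 0)]
  rw [hL, hLsplit, hAneg, hApos, hRfull, hRsplit, hpos, hneg]
  ring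

theorem stmt2 :
    let ω : Set (ℝ × ℝ) := Ioo (0:ℝ) 1 ×ˢ Ioo (-1:ℝ) 1
    let φ : ℝ × ℝ → ℝ := fun p => -Real.sign p.2 * Real.sqrt |p.2|
    let w : ℝ × ℝ → ℝ := fun p => Real.sign p.2 / 2
    ContinuousOn φ ω ∧
    ∀ ψ : ℝ × ℝ → ℝ, ContDiff ℝ (⊤ : ℕ∞) ψ → HasCompactSupport ψ → tsupport ψ ⊆ ω →
      (∫ p in ω, (φ p * fderiv ℝ ψ p (1, 0) + (φ p)^2 / 2 * fderiv ℝ ψ p (0, 1)))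
        = -∫ p in ω, w p * ψ p := by
  intro ω φ w
  have hφeq : φ = fun p : ℝ × ℝ => Real.sqrt (-p.2) - Real.sqrt p.2 :=
    funext fun p => phi_eq p.2
  have hφc : Continuous φ := by
    rw [hφeq]
    exact (continuous_sqrt.comp continuous_snd.neg).sub (continuous_sqrt.comp continuous_snd)
  constructor
  · exact hφc.continuousOn
  intro ψ hψ hcs hsupp
  obtain ⟨R, hR0, hRsupp⟩ := hcs.isBounded.subset_ball_lt 0 0
  -- vanishing facts
  have hψ0 : ∀ p : ℝ × ℝ, R ≤ ‖p‖ → ψ p = 0 := by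
    intro p hp
    apply image_eq_zero_of_notMem_tsupport
    intro hmem
    have := hRsupp hmem
    rw [Metric.mem_ball, dist_zero_right] at this
    linarith
  have hdψ0 : ∀ p : ℝ × ℝ, R ≤ ‖p‖ → fderiv ℝ ψ p = 0 := by
    intro p hp
    apply image_eq_zero_of_notMem_tsupport
    intro hmem
    have := hRsupp (tsupport_fderiv_subset ℝ hmem)
    rw [Metric.mem_ball, dist_zero_right] at this
    linarith
  have hnorm1 : ∀ z t : ℝ, |z| ≤ ‖((z, t) : ℝ × ℝ)‖ := by
    intro z t; rw [Prod.norm_def]; exact le_max_left _ _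
  have hnorm2 : ∀ z t : ℝ, |t| ≤ ‖((z, t) : ℝ × ℝ)‖ := by
    intro z t; rw [Prod.norm_def]; exact le_max_right _ _
  have hψnm : ∀ p : ℝ × ℝ, p ∉ ω → ψ p = 0 := fun p hp =>
    image_eq_zero_of_notMem_tsupport fun hmem => hp (hsupp hmem)
  have hdψnm : ∀ p : ℝ × ℝ, p ∉ ω → fderiv ℝ ψ p = 0 := fun p hp =>
    image_eq_zero_of_notMem_tsupport fun hmem =>
      hp (hsupp (tsupport_fderiv_subset ℝ hmem))
  -- differentiability and slice derivatives
  have hdiff : Differentiable ℝ ψ := hψ.differentiable (by simp)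
  have hD1 : ∀ t z : ℝ, HasDerivAt (fun z => ψ (z, t)) (fderiv ℝ ψ (z, t) (1, 0)) z :=
    fun t z => (hdiff (z, t)).hasFDerivAt.comp_hasDerivAt z
      ((hasDerivAt_id z).prodMk (hasDerivAt_const z t))
  have hD2 : ∀ z t : ℝ, HasDerivAt (fun t => ψ (z, t)) (fderiv ℝ ψ (z, t) (0, 1)) t :=
    fun z t => (hdiff (z, t)).hasFDerivAt.comp_hasDerivAt t
      ((hasDerivAt_const t z).prodMk (hasDerivAt_id t))
  have hfdc : Continuous (fderiv ℝ ψ) := hψ.continuous_fderiv (by simp)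
  have hc1 : Continuous fun p : ℝ × ℝ => fderiv ℝ ψ p (1, 0) :=
    hfdc.clm_apply continuous_const
  have hc2 : Continuous fun p : ℝ × ℝ => fderiv ℝ ψ p (0, 1) :=
    hfdc.clm_apply continuous_const
  -- integrands
  set A : ℝ × ℝ → ℝ := fun p => φ p * fderiv ℝ ψ p (1, 0) with hA
  set B : ℝ × ℝ → ℝ := fun p => (φ p) ^ 2 / 2 * fderiv ℝ ψ p (0, 1) with hB
  have hAc : Continuous A := hφc.mul hc1
  have hBc : Continuous B := ((hφc.pow 2).div_const 2).mul hc2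
  have hAcs : HasCompactSupport A :=
    HasCompactSupport.mul_left (hcs.fderiv_apply ℝ (1, 0))
  have hBcs : HasCompactSupport B :=
    HasCompactSupport.mul_left (hcs.fderiv_apply ℝ (0, 1))
  have hAint : Integrable A := hAc.integrable_of_hasCompactSupport hAcs
  have hBint : Integrable B := hBc.integrable_of_hasCompactSupport hBcs
  have hψc : Continuous ψ := hψ.continuous
  have hψint : Integrable ψ := hψc.integrable_of_hasCompactSupport hcs
  have hwψint : Integrable (fun p : ℝ × ℝ => w p * ψ p) := by
    apply hψint.bdd_mul (c := 1)
      (((measurable_realSign.comp measurable_snd).div_const 2).aestronglyMeasurable)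
    refine Filter.Eventually.of_forall (fun p => ?_)
    simp only [Function.comp_apply]
    rw [Real.norm_eq_abs, abs_div, abs_two]
    have := abs_realSign p.2
    linarith [abs_nonneg (Real.sign p.2)]
  -- reduce set integrals to full integrals
  have hLfull : (∫ p in ω, (A p + B p)) = (∫ p, A p) + ∫ p, B p := by
    rw [setIntegral_eq_integral_of_forall_compl_eq_zero (fun p hp => by
        simp only [hA, hB, hdψnm p hp, ContinuousLinearMap.zero_apply, mul_zero, add_zero]),
      integral_add hAint hBint]
  have hRfull : (∫ p in ω, w p * ψ p) = ∫ p, w p * ψ p :=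
    setIntegral_eq_integral_of_forall_compl_eq_zero (fun p hp => by
      rw [hψnm p hp, mul_zero])
  -- ∫ A = 0
  have hAzero : (∫ p, A p) = 0 := by
    rw [show (volume : Measure (ℝ × ℝ)) = (volume : Measure ℝ).prod volume from
        Measure.volume_eq_prod ℝ ℝ]
    rw [integral_prod_symm A (by rwa [← Measure.volume_eq_prod])]
    have hinner : ∀ t : ℝ, (∫ z, A (z, t)) = 0 := by
      intro t
      have : (∫ z, A (z, t)) = ∫ z, (-Real.sign t * Real.sqrt |t|) * fderiv ℝ ψ (z, t) (1, 0) :=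
        rfl
      rw [this, integral_const_mul, integral_deriv_zero (fun z => ψ (z, t)) (fun z => fderiv ℝ ψ (z, t) (1, 0)) R hR0
          (hD1 t) (hc1.comp (continuous_id.prodMk continuous_const))
          (fun z hz => hψ0 (z, t) (le_trans hz (hnorm1 z t)))
          (fun z hz => by show (fderiv ℝ ψ (z, t)) (1, 0) = 0
                          rw [hdψ0 (z, t) (le_trans hz (hnorm1 z t))]; rfl), mul_zero]
    simp only [hinner, integral_zero]
  -- ∫ B = - ∫ w ψ
  have hBval : (∫ p, B p) = -∫ p, w p * ψ p := by
    rw [show (volume : Measure (ℝ × ℝ)) = (volume : Measure ℝ).prod volume from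
        Measure.volume_eq_prod ℝ ℝ]
    rw [integral_prod B (by rwa [← Measure.volume_eq_prod]),
      integral_prod _ (by rwa [← Measure.volume_eq_prod])]
    rw [← integral_neg]
    apply integral_congr_ae
    apply Filter.Eventually.of_forall
    intro z
    have hBz : ∀ t : ℝ, B (z, t) = |t| / 2 * fderiv ℝ ψ (z, t) (0, 1) := by
      intro t
      show (φ (z, t)) ^ 2 / 2 * _ = _
      have : (φ (z, t)) ^ 2 = |t| := phi_sq t
      rw [this]
    simp only [hBz]
    rw [ibp_abs (fun t => ψ (z, t)) (fun t => fderiv ℝ ψ (z, t) (0, 1)) R hR0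
        (hD2 z) (hψc.comp (continuous_const.prodMk continuous_id))
        (hc2.comp (continuous_const.prodMk continuous_id))
        (fun t ht => hψ0 (z, t) (le_trans ht (hnorm2 z t)))
        (fun t ht => by show (fderiv ℝ ψ (z, t)) (0, 1) = 0
                        rw [hdψ0 (z, t) (le_trans ht (hnorm2 z t))]; rfl)]
  rw [hLfull, hRfull, hAzero, hBval, zero_add]
end

section
/- Let $\gamma_1,\gamma_2:[-\delta,\delta]\to\mathbb{R}$ be $C^1$ curves solving $\dot\gamma_i(s)=f(s,\gamma_i(s))$ for a continuous $f$, and assume each $s\mapsto f(s,\gamma_i(s))$ is differentiable a.e. with derivative bounded by $L$. Set $\tau_i=\gamma_i(0)$, $f_0(\tau)=f(0,\tau)$, and suppose $\tau_2<\tau_1$ and $f_0(\tau_1)-f_0(\tau_2)<-\alpha\sqrt{\tau_1-\tau_2}$ with $\alpha>0$ satisfying $8L\le\alpha^2$ and $\bar s:=2\sqrt{\tau_1-\tau_2}/\alpha\le\delta$. Then there exists $s^*\in(0,\bar s)$ with $\gamma_1(s^*)=\gamma_2(s^*)$. -/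
/-!
Expanding each curve to first order at `0`, the Lipschitz bound on `s ↦ f (s, γᵢ s)` controls the
remainder by `L s²`. At `s̄ = 2 √(τ₁ - τ₂) / α` the gap in initial slopes has pushed `γ₁ - γ₂` down by
more than `2 (τ₁ - τ₂)`, while the two remainders add at most `2 L s̄² ≤ τ₁ - τ₂`; so `γ₁ - γ₂` changes
sign on `(0, s̄)` and vanishes there by the intermediate value theorem.
-/

open Set Real

theorem abs_sub_sub_mul_le_of_hasDerivAt {γ g : ℝ → ℝ} {b C : ℝ}
    (hγ : ∀ s ∈ Icc 0 b, HasDerivAt γ (g s) s) (hg : ∀ s ∈ Icc 0 b, |g s - g 0| ≤ C) :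
    ∀ s ∈ Icc 0 b, |γ s - γ 0 - g 0 * s| ≤ C * s := by
  have hderiv : ∀ s ∈ Icc 0 b,
      HasDerivWithinAt (fun t ↦ γ t - g 0 * t) (g s - g 0) (Icc 0 b) s := fun s hs ↦
    (((hγ s hs).sub ((hasDerivAt_id s).const_mul (g 0))).congr_deriv (by ring)).hasDerivWithinAt
  intro s hs
  have := norm_image_sub_le_of_norm_deriv_le_segment' hderiv
    (fun t ht ↦ hg t (Ico_subset_Icc_self ht)) s hs
  simpa [Real.norm_eq_abs, sub_sub, add_comm] using this

theorem abs_sub_sub_mul_le_of_hasDerivAt_of_abs_sub_le {γ g : ℝ → ℝ} {b L : ℝ} (hL : 0 ≤ L) (hb : 0 ≤ b)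
    (hγ : ∀ s ∈ Icc 0 b, HasDerivAt γ (g s) s) (hg : ∀ s ∈ Icc 0 b, |g s - g 0| ≤ L * s) :
    |γ b - γ 0 - g 0 * b| ≤ L * b * b :=
  abs_sub_sub_mul_le_of_hasDerivAt hγ
    (fun s hs ↦ (hg s hs).trans (mul_le_mul_of_nonneg_left hs.2 hL)) b ⟨hb, le_rfl⟩

theorem lt_of_abs_sub_sub_mul_le {τ₁ τ₂ v₁ v₂ x₁ x₂ L α b : ℝ} (hα : 0 < α)
    (hα2 : 8 * L ≤ α ^ 2) (hlt : τ₂ < τ₁) (hb : α * b = 2 * √(τ₁ - τ₂))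
    (hgap : v₁ - v₂ < -α * √(τ₁ - τ₂))
    (h₁ : |x₁ - τ₁ - v₁ * b| ≤ L * b * b) (h₂ : |x₂ - τ₂ - v₂ * b| ≤ L * b * b) :
    x₁ < x₂ := by
  have hΔ : 0 < τ₁ - τ₂ := sub_pos.mpr hlt
  have hb_pos : 0 < b := pos_of_mul_pos_right (hb ▸ by positivity) hα.le
  have hb_sq : α ^ 2 * b ^ 2 = 4 * (τ₁ - τ₂) := by
    rw [← mul_pow, hb, mul_pow, sq_sqrt hΔ.le]; ring
  have hremainder : 2 * L * b ^ 2 ≤ τ₁ - τ₂ := by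
    nlinarith [mul_le_mul_of_nonneg_right hα2 (sq_nonneg b)]
  have hslope : (v₁ - v₂) * b < -2 * (τ₁ - τ₂) := by
    have := mul_lt_mul_of_pos_right hgap hb_pos
    nlinarith [sq_sqrt hΔ.le]
  have := abs_le.mp h₁
  have := abs_le.mp h₂
  nlinarith

theorem stmt12_general (f : ℝ × ℝ → ℝ)
    (δ L α : ℝ) (hL : 0 ≤ L) (hα : 0 < α) (hα2 : 8 * L ≤ α ^ 2)
    (γ₁ γ₂ : ℝ → ℝ)
    (h1 : ∀ s ∈ Icc (-δ) δ, HasDerivAt γ₁ (f (s, γ₁ s)) s)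
    (h2 : ∀ s ∈ Icc (-δ) δ, HasDerivAt γ₂ (f (s, γ₂ s)) s)
    (hlip1 : ∀ s ∈ Icc (-δ) δ, ∀ s' ∈ Icc (-δ) δ,
      |f (s, γ₁ s) - f (s', γ₁ s')| ≤ L * |s - s'|)
    (hlip2 : ∀ s ∈ Icc (-δ) δ, ∀ s' ∈ Icc (-δ) δ,
      |f (s, γ₂ s) - f (s', γ₂ s')| ≤ L * |s - s'|)
    (τ₁ τ₂ : ℝ) (hτ1 : γ₁ 0 = τ₁) (hτ2 : γ₂ 0 = τ₂) (hlt : τ₂ < τ₁)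
    (hgap : f (0, τ₁) - f (0, τ₂) < -α * Real.sqrt (τ₁ - τ₂))
    (hbars : 2 * Real.sqrt (τ₁ - τ₂) / α ≤ δ) :
    ∃ s' ∈ Ioo (0:ℝ) (2 * Real.sqrt (τ₁ - τ₂) / α), γ₁ s' = γ₂ s' := by
  set b := 2 * √(τ₁ - τ₂) / α
  have hb : 0 < b := div_pos (mul_pos two_pos (sqrt_pos.mpr (sub_pos.mpr hlt))) hα
  have hsub : Icc 0 b ⊆ Icc (-δ) δ := fun s hs ↦ ⟨by linarith [hs.1], hs.2.trans hbars⟩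
  have taylor : ∀ γ : ℝ → ℝ, (∀ s ∈ Icc (-δ) δ, HasDerivAt γ (f (s, γ s)) s) →
      (∀ s ∈ Icc (-δ) δ, ∀ s' ∈ Icc (-δ) δ, |f (s, γ s) - f (s', γ s')| ≤ L * |s - s'|) →
      |γ b - γ 0 - f (0, γ 0) * b| ≤ L * b * b := fun γ hγ hlip ↦
    abs_sub_sub_mul_le_of_hasDerivAt_of_abs_sub_le (g := fun s ↦ f (s, γ s)) hL hb.le
      (fun s hs ↦ hγ s (hsub hs))
      (fun s hs ↦ by simpa [abs_of_nonneg hs.1] using hlip s (hsub hs) 0 (hsub ⟨le_rfl, hb.le⟩))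
  have hend : γ₁ b < γ₂ b := by
    have h₁ := taylor γ₁ h1 hlip1
    have h₂ := taylor γ₂ h2 hlip2
    rw [hτ1] at h₁
    rw [hτ2] at h₂
    exact lt_of_abs_sub_sub_mul_le hα hα2 hlt (mul_div_cancel₀ _ hα.ne') hgap h₁ h₂
  have hcont : ContinuousOn (fun s ↦ γ₁ s - γ₂ s) (Icc 0 b) := fun s hs ↦
    ((h1 s (hsub hs)).continuousAt.sub (h2 s (hsub hs)).continuousAt).continuousWithinAt
  obtain ⟨s, hs, hcross⟩ := intermediate_value_Ioo' hb.le hcont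
    ⟨sub_neg.mpr hend, by simpa [hτ1, hτ2] using hlt⟩
  exact ⟨s, hs, sub_eq_zero.mp hcross⟩

theorem stmt12 (f : ℝ × ℝ → ℝ) (hf : Continuous f)
    (δ L α : ℝ) (hδ : 0 < δ) (hL : 0 ≤ L) (hα : 0 < α) (hα2 : 8 * L ≤ α ^ 2)
    (γ₁ γ₂ : ℝ → ℝ)
    (h1 : ∀ s ∈ Icc (-δ) δ, HasDerivAt γ₁ (f (s, γ₁ s)) s)
    (h2 : ∀ s ∈ Icc (-δ) δ, HasDerivAt γ₂ (f (s, γ₂ s)) s)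
    (hlip1 : ∀ s ∈ Icc (-δ) δ, ∀ s' ∈ Icc (-δ) δ,
      |f (s, γ₁ s) - f (s', γ₁ s')| ≤ L * |s - s'|)
    (hlip2 : ∀ s ∈ Icc (-δ) δ, ∀ s' ∈ Icc (-δ) δ,
      |f (s, γ₂ s) - f (s', γ₂ s')| ≤ L * |s - s'|)
    (τ₁ τ₂ : ℝ) (hτ1 : γ₁ 0 = τ₁) (hτ2 : γ₂ 0 = τ₂) (hlt : τ₂ < τ₁)
    (hgap : f (0, τ₁) - f (0, τ₂) < -α * Real.sqrt (τ₁ - τ₂))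
    (hbars : 2 * Real.sqrt (τ₁ - τ₂) / α ≤ δ) :
    ∃ s' ∈ Ioo (0:ℝ) (2 * Real.sqrt (τ₁ - τ₂) / α), γ₁ s' = γ₂ s' :=
  stmt12_general f δ L α hL hα hα2 γ₁ γ₂ h1 h2 hlip1 hlip2 τ₁ τ₂ hτ1 hτ2 hlt hgap hbars
end

section
/- Let $\gamma:[0,1]\to\mathbb{R}$ be a characteristic ($\dot\gamma=\phi(s,\gamma(s))$ for a continuous $\phi$), with $\dot\gamma$ Lipschitz, and fix $m\in\mathbb{N}$ and $\delta>0$. Suppose $\{\gamma'_\alpha\}$ is a family of characteristics, each $C^1$ with Lipschitz derivative, pairwise non-crossing (for any two, one stays $\le$ the other on all of $[0,1]$), and such that each $\gamma'_\alpha$ touches $\gamma$ at some $\bar s_\alpha$ (i.e. $\gamma'_\alpha(\bar s_\alpha)=\gamma(\bar s_\alpha)$, $\dot\gamma'_\alpha(\bar s_\alpha)=\dot\gamma(\bar s_\alpha)$) with $\ddot\gamma'_\alpha(\bar s_\alpha)$ existing and $\ddot\gamma'_\alpha(\bar s_\alpha)>1/m$ while $\ddot\gamma(\bar s_\alpha)$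 exists and differs. Then the set of such touching times $\{\bar s_\alpha\}$ is at most countable. -/
open Set Real

/-- A family of points in ℝ such that any two distinct ones are separated by the
minimum of their attached radii has countable range. -/
lemma countable_of_sep {ι : Type*} (sb : ι → ℝ) (ε : ι → ℝ) (hε : ∀ i, 0 < ε i)
    (hsep : ∀ i j, sb i ≠ sb j → min (ε i) (ε j) ≤ |sb i - sb j|) :
    (Set.range sb).Countable := by
  have hsub : Set.range sb ⊆ ⋃ n : ℕ, {t | ∃ i, sb i = t ∧ 1/((n:ℝ)+1) < ε i} := by
    rintro t ⟨i, rfl⟩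
    obtain ⟨n, hn⟩ := exists_nat_one_div_lt (hε i)
    exact Set.mem_iUnion.mpr ⟨n, i, rfl, hn⟩
  refine Set.Countable.mono hsub (Set.countable_iUnion fun n => ?_)
  set δ : ℝ := 1/((n:ℝ)+1) with hδdef
  have hδ : 0 < δ := by positivity
  have key : ∀ t : ℝ, ∃ q : ℚ, t < q ∧ (q:ℝ) < t + δ/2 := by
    intro t
    exact exists_rat_btwn (by linarith)
  choose q hq1 hq2 using key
  rw [Set.countable_iff_exists_injOn]
  refine ⟨fun t => Encodable.encode (q t), ?_⟩
  rintro t ⟨i, rfl, hi⟩ t' ⟨j, rfl, hj⟩ h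
  have hq : q (sb i) = q (sb j) := Encodable.encode_injective h
  by_contra hne
  have h1 := hsep i j hne
  have h2 : δ < min (ε i) (ε j) := lt_min hi hj
  have hqi1 := hq1 (sb i); have hqi2 := hq2 (sb i)
  have hqj1 := hq1 (sb j); have hqj2 := hq2 (sb j)
  rw [hq] at hqi1 hqi2
  have : |sb i - sb j| < δ := by
    rw [abs_sub_lt_iff]; constructor <;> linarith
  linarith [lt_of_lt_of_le h2 h1]

theorem stmt13 (φ : ℝ × ℝ → ℝ) (hφ : Continuous φ) (m : ℕ) (hm : 0 < m)
    (γ : ℝ → ℝ) (K : ℝ)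
    (hγ : ∀ s ∈ Icc (0:ℝ) 1, HasDerivAt γ (φ (s, γ s)) s)
    (hγlip : ∀ s ∈ Icc (0:ℝ) 1, ∀ s' ∈ Icc (0:ℝ) 1,
      |φ (s, γ s) - φ (s', γ s')| ≤ K * |s - s'|)
    {ι : Type*} (γ' : ι → ℝ → ℝ) (sb : ι → ℝ) (c d : ι → ℝ)
    (hγ' : ∀ i, ∀ s ∈ Icc (0:ℝ) 1, HasDerivAt (γ' i) (φ (s, γ' i s)) s)
    (hγ'lip : ∀ i, ∀ s ∈ Icc (0:ℝ) 1, ∀ s' ∈ Icc (0:ℝ) 1,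
      |φ (s, γ' i s) - φ (s', γ' i s')| ≤ K * |s - s'|)
    (hnocross : ∀ i j, (∀ s ∈ Icc (0:ℝ) 1, γ' i s ≤ γ' j s) ∨
      (∀ s ∈ Icc (0:ℝ) 1, γ' j s ≤ γ' i s))
    (hsb : ∀ i, sb i ∈ Icc (0:ℝ) 1)
    (htouch : ∀ i, γ' i (sb i) = γ (sb i))
    (htouch' : ∀ i, φ (sb i, γ' i (sb i)) = φ (sb i, γ (sb i)))
    (h2nd : ∀ i, HasDerivAt (fun s => φ (s, γ' i s)) (c i) (sb i) ∧ 1 / (m:ℝ) < c i)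
    (h2ndγ : ∀ i, HasDerivAt (fun s => φ (s, γ s)) (d i) (sb i) ∧ d i ≠ c i) :
    (Set.range sb).Countable := by
  classical
  -- notation (opaque local definitions)
  obtain ⟨f, hfdef⟩ : ∃ f : ι → ℝ → ℝ, f = fun i s => γ' i s - γ s := ⟨_, rfl⟩
  obtain ⟨g, hgdef⟩ : ∃ g : ι → ℝ → ℝ, g = fun i s => φ (s, γ' i s) - φ (s, γ s) := ⟨_, rfl⟩
  obtain ⟨e, hedef⟩ : ∃ e : ι → ℝ, e = fun i => c i - d i := ⟨_, rfl⟩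
  have he : ∀ i, e i ≠ 0 := by
    intro i; rw [hedef]; exact sub_ne_zero.mpr (Ne.symm (h2ndγ i).2)
  have hfderiv : ∀ i, ∀ s ∈ Icc (0:ℝ) 1, HasDerivAt (f i) (g i s) s := by
    intro i s hs; rw [hfdef, hgdef]; exact (hγ' i s hs).sub (hγ s hs)
  have hg0 : ∀ i, g i (sb i) = 0 := by
    intro i; rw [hgdef]; exact sub_eq_zero.mpr (htouch' i)
  have hgderiv : ∀ i, HasDerivAt (g i) (e i) (sb i) := by
    intro i; rw [hgdef, hedef]; exact (h2nd i).1.sub (h2ndγ i).1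
  -- key sign lemma: near sb i, γ' i - γ has the sign of e i
  have key : ∀ i, ∃ ε > 0, ∀ s ∈ Icc (0:ℝ) 1, s ≠ sb i → |s - sb i| < ε →
      0 < e i * f i s := by
    intro i
    have hlo := (hasDerivAt_iff_isLittleO.mp (hgderiv i)).def
      (half_pos (abs_pos.mpr (he i)))
    rw [Metric.eventually_nhds_iff] at hlo
    obtain ⟨ε, hε, hball⟩ := hlo
    -- first: sign of g near sb i
    have hgsign : ∀ ξ : ℝ, ξ ≠ sb i → |ξ - sb i| < ε → 0 < (e i * g i ξ) * (ξ - sb i) := by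
      intro ξ hne hlt
      have hb := hball (show dist ξ (sb i) < ε by rwa [Real.dist_eq])
      simp only [smul_eq_mul, Real.norm_eq_abs, hg0 i, sub_zero] at hb
      have hbb : |g i ξ - (ξ - sb i) * e i| ≤ |e i| / 2 * |ξ - sb i| := hb
      have hne' : ξ - sb i ≠ 0 := sub_ne_zero.mpr hne
      have h1 : |e i| / 2 * |ξ - sb i| = |(ξ - sb i) * e i| / 2 := by
        rw [abs_mul]; ring
      rw [h1] at hbb
      obtain ⟨b, hbdef⟩ : ∃ b : ℝ, b = (ξ - sb i) * e i := ⟨_, rfl⟩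
      rw [← hbdef] at hbb
      have hbne : b ≠ 0 := hbdef ▸ mul_ne_zero hne' (he i)
      have hgb : 0 < g i ξ * b := by
        rcases hbne.lt_or_gt with hb0 | hb0
        · have hgle : g i ξ ≤ b - b/2 := by
            have := abs_le.mp hbb
            have hb2 : |b| = -b := abs_of_neg hb0
            rw [hb2] at this; linarith [this.2]
          exact mul_pos_of_neg_of_neg (by linarith) hb0
        · have hgle : b - b/2 ≤ g i ξ := by
            have := abs_le.mp hbb
            have hb2 : |b| = b := abs_of_pos hb0
            rw [hb2] at this; linarith [this.1]
          exact mul_pos (by linarith) hb0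
      have hre : (e i * g i ξ) * (ξ - sb i) = g i ξ * b := by rw [hbdef]; ring
      rw [hre]; exact hgb
    refine ⟨ε, hε, fun s hs hne hlt => ?_⟩
    have hsbI := hsb i
    rcases hne.lt_or_gt with hlt' | hlt'
    · -- s < sb i
      have hcont : ContinuousOn (f i) (Icc s (sb i)) := fun x hx =>
        ((hfderiv i x ⟨le_trans hs.1 hx.1, le_trans hx.2 hsbI.2⟩).continuousAt).continuousWithinAt
      obtain ⟨ξ, hξ, hslope⟩ := exists_hasDerivAt_eq_slope (f i) (g i) hlt' hcont
        (fun x hx => hfderiv i x ⟨le_trans hs.1 (le_of_lt hx.1), le_trans (le_of_lt hx.2) hsbI.2⟩)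
      have hfsb : f i (sb i) = 0 := by simp only [hfdef]; exact sub_eq_zero.mpr (htouch i)
      rw [hfsb] at hslope
      have hξne : ξ ≠ sb i := ne_of_lt hξ.2
      have hξlt : |ξ - sb i| < ε := by
        rw [abs_sub_lt_iff]
        rw [abs_sub_lt_iff] at hlt
        constructor <;> [linarith [hξ.2]; linarith [hξ.1, hlt.2]]
      have hsgn := hgsign ξ hξne hξlt
      have hd0 : sb i - s ≠ 0 := by intro h0; linarith [hξ.1, hξ.2, sub_eq_zero.mp h0]
      rw [eq_div_iff hd0] at hslope
      have hfs : f i s = -(g i ξ) * (sb i - s) := by linear_combination hslope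
      have hd : ξ - sb i < 0 := sub_neg.mpr hξ.2
      have hAneg : e i * g i ξ < 0 := by
        rcases mul_pos_iff.mp hsgn with ⟨hA, hB⟩ | ⟨hA, hB⟩
        · linarith
        · exact hA
      have hre : e i * f i s = (-(e i * g i ξ)) * (sb i - s) := by rw [hfs]; ring
      rw [hre]
      exact mul_pos (by linarith) (by linarith [hξ.1, hlt'])
    · -- sb i < s
      have hcont : ContinuousOn (f i) (Icc (sb i) s) := fun x hx =>
        ((hfderiv i x ⟨le_trans hsbI.1 hx.1, le_trans hx.2 hs.2⟩).continuousAt).continuousWithinAt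
      obtain ⟨ξ, hξ, hslope⟩ := exists_hasDerivAt_eq_slope (f i) (g i) hlt' hcont
        (fun x hx => hfderiv i x ⟨le_trans hsbI.1 (le_of_lt hx.1), le_trans (le_of_lt hx.2) hs.2⟩)
      have hfsb : f i (sb i) = 0 := by simp only [hfdef]; exact sub_eq_zero.mpr (htouch i)
      rw [hfsb] at hslope
      have hξne : ξ ≠ sb i := ne_of_gt hξ.1
      have hξlt : |ξ - sb i| < ε := by
        rw [abs_sub_lt_iff]
        rw [abs_sub_lt_iff] at hlt
        constructor <;> [linarith [hξ.2, hlt.1]; linarith [hξ.1]]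
      have hsgn := hgsign ξ hξne hξlt
      have hd0 : s - sb i ≠ 0 := by intro h0; linarith [hξ.1, hξ.2, sub_eq_zero.mp h0]
      rw [eq_div_iff hd0] at hslope
      have hfs : f i s = g i ξ * (s - sb i) := by linear_combination -hslope
      have hd : 0 < ξ - sb i := sub_pos.mpr hξ.1
      have hApos : 0 < e i * g i ξ := by
        rcases mul_pos_iff.mp hsgn with ⟨hA, hB⟩ | ⟨hA, hB⟩
        · exact hA
        · linarith
      have hre : e i * f i s = (e i * g i ξ) * (s - sb i) := by rw [hfs]; ring
      rw [hre]
      exact mul_pos hApos (by linarith)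
  choose ε hεpos hεsign using key
  -- two touching points of the same e-sign cannot be mutually within each other's ε
  have pair : ∀ i j, e i * e j > 0 → sb i ≠ sb j → min (ε i) (ε j) ≤ |sb i - sb j| := by
    intro i j hsign hne
    by_contra hcon
    push_neg at hcon
    have h1 : |sb j - sb i| < ε i := by
      rw [abs_sub_comm]; exact lt_of_lt_of_le hcon (min_le_left _ _)
    have h2 : |sb i - sb j| < ε j := lt_of_lt_of_le hcon (min_le_right _ _)
    have hA := hεsign i (sb j) (hsb j) (Ne.symm hne) h1
    have hB := hεsign j (sb i) (hsb i) hne h2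
    -- f i (sb j) and f j (sb i) have the signs of e i, e j resp., which agree
    have htj := htouch j
    have hti := htouch i
    rcases hnocross i j with h | h
    · -- γ' i ≤ γ' j everywhere
      have hij := h (sb j) (hsb j)
      have hji := h (sb i) (hsb i)
      -- f i (sb j) = γ' i (sb j) - γ (sb j) ≤ 0 ; f j (sb i) ≥ 0
      have hA' : f i (sb j) ≤ 0 := by rw [hfdef]; simp only []; rw [← htj]; linarith
      have hB' : 0 ≤ f j (sb i) := by rw [hfdef]; simp only []; rw [← hti]; linarith
      have hei : e i < 0 := by
        rcases mul_pos_iff.mp hA with ⟨_, hf⟩ | ⟨hh, _⟩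
        · linarith
        · exact hh
      have hej : 0 < e j := by
        rcases mul_pos_iff.mp hB with ⟨hh, _⟩ | ⟨_, hf⟩
        · exact hh
        · linarith
      have := mul_neg_of_neg_of_pos hei hej
      linarith
    · have hij := h (sb j) (hsb j)
      have hji := h (sb i) (hsb i)
      have hA' : 0 ≤ f i (sb j) := by rw [hfdef]; simp only []; rw [← htj]; linarith
      have hB' : f j (sb i) ≤ 0 := by rw [hfdef]; simp only []; rw [← hti]; linarith
      have hei : 0 < e i := by
        rcases mul_pos_iff.mp hA with ⟨hh, _⟩ | ⟨_, hf⟩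
        · exact hh
        · linarith
      have hej : e j < 0 := by
        rcases mul_pos_iff.mp hB with ⟨_, hf⟩ | ⟨hh, _⟩
        · linarith
        · exact hh
      have := mul_neg_of_pos_of_neg hei hej
      linarith
  -- split range by sign of e
  have hsplit : Set.range sb =
      (Set.range fun i : {i // 0 < e i} => sb i.1) ∪
      (Set.range fun i : {i // e i < 0} => sb i.1) := by
    ext t
    constructor
    · rintro ⟨i, rfl⟩
      rcases (he i).lt_or_gt with h | h
      · exact Or.inr ⟨⟨i, h⟩, rfl⟩
      · exact Or.inl ⟨⟨i, h⟩, rfl⟩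
    · rintro (⟨i, rfl⟩ | ⟨i, rfl⟩) <;> exact ⟨_, rfl⟩
  rw [hsplit]
  refine Set.Countable.union ?_ ?_
  · exact countable_of_sep _ (fun i => ε i.1) (fun i => hεpos i.1)
      (fun i j hne => pair i.1 j.1 (mul_pos i.2 j.2) hne)
  · exact countable_of_sep _ (fun i => ε i.1) (fun i => hεpos i.1)
      (fun i j hne => pair i.1 j.1 (mul_pos_of_neg_of_neg i.2 j.2) hne)
end

section
/- Let $\phi\in C^0(\omega)$ with $\omega\subset\mathbb{R}^2$ open, and suppose $\phi$ is a distributional solution of $\partial_z\phi+\partial_t(\phi^2/2)=w$ with $w\in L^\infty(\omega)$. Suppose moreover that for every point of $\omega$ there passes a characteristic curve $\gamma$ ($\dot\gamma=\phi(s,\gamma(s))$) along which $s\mapsto\phi(s,\gamma(s))$ is $\|w\|_\infty$-Lipschitz, and that $\phi$ is locally $1/2$-Hölder in $t$ for fixed $z$ with constant $C$. Then for any two points $B=(z,t)$, $B'=(z',t')$ in a sufficiently small box, $|\phi(B)-\phi(B')|\le L\,d_\phi(B,B')$, where $d_\phi(B,B')=|z'-z|+\left|t'-t-\tfrac{1}{2}(\phi(B)+\phi(B'))(z'-z)\right|^{1/2}$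 and $L$ depends only on $\|w\|_\infty$ and $C$. -/
open Set Real MeasureTheory

private lemma my_sqrt_add_le (a b : ℝ) (ha : 0 ≤ a) (hb : 0 ≤ b) :
    Real.sqrt (a + b) ≤ Real.sqrt a + Real.sqrt b := by
  have h2 : a + b ≤ (Real.sqrt a + Real.sqrt b) ^ 2 := by
    have ha' := Real.sq_sqrt ha
    have hb' := Real.sq_sqrt hb
    nlinarith [Real.sqrt_nonneg a, Real.sqrt_nonneg b]
  calc Real.sqrt (a + b) ≤ Real.sqrt ((Real.sqrt a + Real.sqrt b) ^ 2) := Real.sqrt_le_sqrt h2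
    _ = Real.sqrt a + Real.sqrt b := Real.sqrt_sq (by positivity)

set_option maxHeartbeats 1000000 in
private lemma my_amgm (c p q : ℝ) : c * (p * q) ≤ p ^ 2 / 2 + c ^ 2 * q ^ 2 / 2 := by
  nlinarith [sq_nonneg (p - c * q)]

theorem stmt18 (ω : Set (ℝ × ℝ)) (hω : IsOpen ω)
    (φ w : ℝ × ℝ → ℝ) (W C : ℝ) (hW : 0 ≤ W) (hC : 0 ≤ C)
    (hφc : ContinuousOn φ ω) (hφb : ∃ M, ∀ p ∈ ω, |φ p| ≤ M)
    (hwb : ∀ p ∈ ω, |w p| ≤ W)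
    (hdistr : ∀ ψ : ℝ × ℝ → ℝ, ContDiff ℝ (⊤ : ℕ∞) ψ → HasCompactSupport ψ → tsupport ψ ⊆ ω →
      (∫ p in ω, (φ p * fderiv ℝ ψ p (1, 0) + (φ p)^2 / 2 * fderiv ℝ ψ p (0, 1)))
        = -∫ p in ω, w p * ψ p)
    (hchar : ∀ A ∈ ω, ∃ δ > 0, ∃ γ : ℝ → ℝ, γ A.1 = A.2 ∧
      ∀ s ∈ Icc (A.1 - δ) (A.1 + δ), (s, γ s) ∈ ω ∧ HasDerivAt γ (φ (s, γ s)) s ∧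
        ∀ s' ∈ Icc (A.1 - δ) (A.1 + δ), |φ (s, γ s) - φ (s', γ s')| ≤ W * |s - s'|)
    (hhold : ∀ p ∈ ω, ∀ q ∈ ω, p.1 = q.1 → |φ p - φ q| ≤ C * Real.sqrt |p.2 - q.2|) :
    ∃ L > 0, ∀ A ∈ ω, ∃ r > 0, ∀ B ∈ Metric.ball A r ∩ ω, ∀ B' ∈ Metric.ball A r ∩ ω,
      |φ B - φ B'| ≤ L * (|B'.1 - B.1| +
        Real.sqrt |B'.2 - B.2 - (φ B + φ B') / 2 * (B'.1 - B.1)|) := by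
  obtain ⟨M₀, hM₀⟩ := hφb
  set M : ℝ := max M₀ 0 with hMdef
  have hM0 : 0 ≤ M := le_max_right _ _
  have hφM : ∀ p ∈ ω, |φ p| ≤ M := fun p hp => (hM₀ p hp).trans (le_max_left _ _)
  set L : ℝ := (4/3) * (W + C * Real.sqrt W + C^2/2 + C) + 1 with hLdef
  have hL0 : 0 < L := by
    have h1 : 0 ≤ C * Real.sqrt W := mul_nonneg hC (Real.sqrt_nonneg W)
    have h2 : 0 ≤ C^2 := sq_nonneg C
    rw [hLdef]; linarith only [hW, hC, h1, h2]
  clear_value L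
  refine ⟨L, hL0, ?_⟩
  intro A hA
  obtain ⟨ρ₂, hρ₂pos, hρ₂sub⟩ := Metric.isOpen_iff.1 hω A hA
  set ρ : ℝ := ρ₂ / 2 with hρdef
  have hρpos : 0 < ρ := by rw [hρdef]; linarith
  have hsub : Metric.closedBall A ρ ⊆ ω :=
    (Metric.closedBall_subset_ball (by rw [hρdef]; linarith)).trans hρ₂sub
  set den : ℝ := 3 + 2*M + 4*W*ρ with hdendef
  have hWρ : 0 ≤ W * ρ := mul_nonneg hW (le_of_lt hρpos)
  have hden : 0 < den := by rw [hdendef]; linarith only [hM0, hWρ]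
  set r : ℝ := ρ / den with hrdef
  have hrpos : 0 < r := div_pos hρpos hden
  have hrden : r * den = ρ := div_mul_cancel₀ _ (ne_of_gt hden)
  have hrdeneq : r * (3 + 2*M + 4*W*ρ) = ρ := by rw [← hdendef]; exact hrden
  have hrρ3 : 3 * r ≤ ρ := by
    have h := mul_nonneg (le_of_lt hrpos)
      (show (0:ℝ) ≤ 2*M + 4*W*ρ by linarith only [hM0, hWρ])
    linarith only [hrdeneq, h]
  have hrρ : r ≤ ρ := by linarith only [hrρ3, hrpos]
  refine ⟨r, hrpos, ?_⟩
  rintro ⟨z, t⟩ ⟨hBball, hBω⟩ ⟨z', t'⟩ ⟨hB'ball, hB'ω⟩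
  show |φ (z, t) - φ (z', t')| ≤ L * (|z' - z| +
    Real.sqrt |t' - t - (φ (z, t) + φ (z', t')) / 2 * (z' - z)|)
  rw [Metric.mem_ball, Prod.dist_eq, max_lt_iff, Real.dist_eq, Real.dist_eq] at hBball hB'ball
  obtain ⟨hz1, ht1⟩ := hBball
  obtain ⟨hz1', ht1'⟩ := hB'ball
  have hz1n : |z - A.1| < r := hz1
  have ht1n : |t - A.2| < r := ht1
  have hz1n' : |z' - A.1| < r := hz1'

  set u : ℝ := |z' - z| with hudef
  have hu0 : 0 ≤ u := abs_nonneg _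
  have hu2r : u < 2 * r := by
    have h := abs_sub_le z' A.1 z
    rw [abs_sub_comm A.1 z] at h
    rw [hudef]; linarith only [h, hz1n, hz1n']
  obtain ⟨ε, hε1, hεu⟩ : ∃ ε : ℝ, |ε| = 1 ∧ z + ε * u = z' := by
    rcases le_total z z' with h | h
    · exact ⟨1, abs_one, by rw [hudef, abs_of_nonneg (by linarith only [h])]; ring⟩
    · refine ⟨-1, by norm_num, ?_⟩
      rw [hudef, abs_of_nonpos (by linarith only [h])]; ring
  set Φ : ℝ := φ (z, t) with hΦdef
  have hΦM : |Φ| ≤ M := hφM (z, t) hBω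
  -- the reachable set
  set K0 : Set (ℝ × ℝ) := {q | q.1 ∈ Icc 0 u ∧ (z + ε*q.1, q.2) ∈ Metric.closedBall A ρ}
    with hK0def
  set F : ℝ × ℝ → ℝ × ℝ := fun q =>
      (|φ (z + ε*q.1, q.2) - Φ| - W*q.1, |q.2 - t - Φ*(ε*q.1)| - W*q.1^2) with hFdef
  set K : Set (ℝ × ℝ) := K0 ∩ F ⁻¹' {p : ℝ × ℝ | p.1 ≤ 0 ∧ p.2 ≤ 0} with hKdef
  have hKmem : ∀ σ τ : ℝ, ((σ, τ) ∈ K ↔ σ ∈ Icc 0 u ∧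
      ((z + ε*σ, τ) ∈ Metric.closedBall A ρ ∧
        (|φ (z + ε*σ, τ) - Φ| ≤ W*σ ∧ |τ - t - Φ*(ε*σ)| ≤ W*σ^2))) := by
    intro σ τ
    simp only [hKdef, hK0def, hFdef, Set.mem_inter_iff, Set.mem_setOf_eq, Set.mem_preimage,
      sub_nonpos, and_assoc]
  have hcbmem : ∀ p : ℝ × ℝ, |p.1 - A.1| ≤ ρ → |p.2 - A.2| ≤ ρ →
      p ∈ Metric.closedBall A ρ := by
    intro p h1 h2
    rw [Metric.mem_closedBall, Prod.dist_eq, Real.dist_eq, Real.dist_eq]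
    exact max_le h1 h2
  have hK0closed : IsClosed K0 := by
    rw [hK0def]
    exact IsClosed.inter (isClosed_Icc.preimage continuous_fst)
      (Metric.isClosed_closedBall.preimage (by fun_prop))
  have hK0sub : K0 ⊆ Icc 0 u ×ˢ Icc (A.2 - ρ) (A.2 + ρ) := by
    rintro ⟨σ, τ⟩ ⟨h1, h2⟩
    rw [Metric.mem_closedBall, Prod.dist_eq, Real.dist_eq, Real.dist_eq, max_le_iff] at h2
    obtain ⟨hl, hr⟩ := abs_le.1 h2.2
    exact ⟨h1, mem_Icc.2 ⟨by linarith, by linarith⟩⟩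
  have hK0comp : IsCompact K0 :=
    (isCompact_Icc.prod isCompact_Icc).of_isClosed_subset hK0closed hK0sub
  have hφ2cont : ContinuousOn (fun q : ℝ × ℝ => φ (z + ε*q.1, q.2)) K0 :=
    hφc.comp ((by fun_prop : Continuous fun q : ℝ × ℝ => (z + ε*q.1, q.2)).continuousOn)
      (fun q hq => hsub hq.2)
  have hFcont : ContinuousOn F K0 := by
    rw [hFdef]
    apply ContinuousOn.prodMk
    · exact (continuous_abs.comp_continuousOn (hφ2cont.sub continuousOn_const)).sub
        ((continuous_const.mul continuous_fst).continuousOn)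
    · exact (by fun_prop :
        Continuous fun q : ℝ × ℝ => |q.2 - t - Φ*(ε*q.1)| - W*q.1^2).continuousOn
  have hKclosed : IsClosed K := by
    rw [hKdef]
    exact hFcont.preimage_isClosed_of_isClosed hK0closed
      ((isClosed_le continuous_fst continuous_const).inter
        (isClosed_le continuous_snd continuous_const))
  have hKcomp : IsCompact K := hK0comp.of_isClosed_subset hKclosed
    (by rw [hKdef]; exact inter_subset_left)
  have hSne : (Prod.fst '' K).Nonempty := by
    refine ⟨0, (0, t), ?_, rfl⟩
    rw [hKmem]
    refine ⟨⟨le_refl 0, hu0⟩, ?_, ?_, ?_⟩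
    · have : z + ε*0 = z := by ring
      rw [this]
      exact hcbmem (z, t) (le_trans (le_of_lt hz1) hrρ) (le_trans (le_of_lt ht1) hrρ)
    · have : z + ε*0 = z := by ring
      rw [this]
      simp [hΦdef]
    · simp
  have hScomp : IsCompact (Prod.fst '' K) := hKcomp.image continuous_fst
  have hSbdd : BddAbove (Prod.fst '' K) := hScomp.bddAbove
  have hsupS : sSup (Prod.fst '' K) ∈ Prod.fst '' K := hScomp.sSup_mem hSne
  -- the reachability claim
  have hfin : u ∈ Prod.fst '' K := by
    obtain ⟨⟨σ, τ⟩, hqK, hq1⟩ := hsupS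
    have hq1' : σ = sSup (Prod.fst '' K) := hq1
    obtain ⟨hσIcc, hcb, hφτ, hdr⟩ := (hKmem σ τ).1 hqK
    rcases eq_or_lt_of_le hσIcc.2 with heq | hlt
    · exact ⟨(σ, τ), hqK, heq⟩
    exfalso
    set b : ℝ := z + ε * σ with hbdef
    have hPω : (b, τ) ∈ ω := hsub hcb
    obtain ⟨δ, hδpos, γ, hγ0, hγ⟩ := hchar (b, τ) hPω
    have hγb : γ b = τ := hγ0
    set σ₂ : ℝ := min u (σ + δ) with hσ₂def
    have hσ₂gt : σ < σ₂ := lt_min hlt (by linarith only [hδpos])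
    have hσ₂le : σ₂ ≤ u := min_le_left _ _
    have hσ₂δ : σ₂ - σ ≤ δ := by
      have h := min_le_right u (σ + δ)
      rw [hσ₂def]; linarith only [h]
    set b₂ : ℝ := z + ε * σ₂ with hb₂def
    have hbb₂ : b₂ - b = ε * (σ₂ - σ) := by rw [hbdef, hb₂def]; ring
    have habs : |b₂ - b| = σ₂ - σ := by
      rw [hbb₂, abs_mul, hε1, one_mul, abs_of_nonneg (by linarith only [hσ₂gt])]
    have hb₂δ : |b₂ - b| ≤ δ := le_trans (le_of_eq habs) hσ₂δ
    have hb₂mem : b - δ ≤ b₂ ∧ b₂ ≤ b + δ := by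
      have h := abs_le.1 hb₂δ
      constructor <;> linarith only [h.1, h.2]
    have hIccsub : uIcc b b₂ ⊆ Icc (b - δ) (b + δ) := by
      intro s hs
      rw [Set.mem_uIcc] at hs
      rw [mem_Icc]
      rcases hs with ⟨h1, h2⟩ | ⟨h1, h2⟩ <;>
        exact ⟨by linarith only [h1, h2, hb₂mem.1, hb₂mem.2, hδpos],
          by linarith only [h1, h2, hb₂mem.1, hb₂mem.2, hδpos]⟩
    have hbmem : b ∈ Icc (b - δ) (b + δ) := by
      rw [mem_Icc]; constructor <;> linarith only [hδpos]
    -- Lipschitz along the local characteristic from the base point b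
    have hLip : ∀ s ∈ uIcc b b₂, |φ (s, γ s) - φ (b, τ)| ≤ W * (σ₂ - σ) := by
      intro s hs
      have hsb : |s - b| ≤ σ₂ - σ := by
        rw [Set.mem_uIcc] at hs
        rw [abs_le]
        have hbb := abs_le.1 (le_of_eq habs)
        rcases hs with ⟨h1, h2⟩ | ⟨h1, h2⟩ <;>
          exact ⟨by linarith only [h1, h2, hbb.1, hbb.2],
            by linarith only [h1, h2, hbb.1, hbb.2]⟩
      have h := ((hγ s (hIccsub hs)).2.2) b hbmem
      rw [hγb] at h
      exact h.trans (mul_le_mul_of_nonneg_left hsb hW)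
    -- mean value estimate along the local characteristic
    have hMVT : |γ b₂ - τ - φ (b, τ) * (ε * (σ₂ - σ))| ≤ W * (σ₂ - σ) * (σ₂ - σ) := by
      have hder : ∀ s ∈ uIcc b b₂, HasDerivWithinAt (fun s => γ s - φ (b, τ) * s)
          (φ (s, γ s) - φ (b, τ)) (uIcc b b₂) s := by
        intro s hs
        have h1 : HasDerivAt (fun s : ℝ => φ (b, τ) * s) (φ (b, τ)) s := by
          simpa using (hasDerivAt_id s).const_mul (φ (b, τ))
        exact (((hγ s (hIccsub hs)).2.1).sub h1).hasDerivWithinAt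
      have hbound : ∀ s ∈ uIcc b b₂, ‖φ (s, γ s) - φ (b, τ)‖ ≤ W * (σ₂ - σ) := by
        intro s hs; rw [Real.norm_eq_abs]; exact hLip s hs
      have h2 := (convex_uIcc b b₂).norm_image_sub_le_of_norm_hasDerivWithin_le hder hbound
        left_mem_uIcc right_mem_uIcc
      rw [Real.norm_eq_abs, Real.norm_eq_abs, habs] at h2
      have e : γ b₂ - τ - φ (b, τ) * (ε * (σ₂ - σ)) =
          (γ b₂ - φ (b, τ) * b₂) - (γ b - φ (b, τ) * b) := by
        rw [hγb, ← hbb₂]; ring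
      rw [e]; exact h2
    have hσ₂0 : 0 ≤ σ₂ := le_trans hσIcc.1 (le_of_lt hσ₂gt)
    have hσ₂2r : σ₂ < 2*r := lt_of_le_of_lt hσ₂le hu2r
    have hφb₂ : |φ (b₂, γ b₂) - φ (b, τ)| ≤ W * (σ₂ - σ) := hLip b₂ right_mem_uIcc
    have hφnew : |φ (b₂, γ b₂) - Φ| ≤ W * σ₂ := by
      have h := abs_sub_le (φ (b₂, γ b₂)) (φ (b, τ)) Φ
      linarith only [h, hφb₂, hφτ]
    have hdrnew : |γ b₂ - t - Φ * (ε * σ₂)| ≤ W * σ₂^2 := by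
      have e1 : γ b₂ - t - Φ * (ε*σ₂) = (γ b₂ - τ - φ (b, τ) * (ε*(σ₂ - σ))) +
          ((φ (b, τ) - Φ) * (ε*(σ₂-σ)) + (τ - t - Φ*(ε*σ))) := by ring
      have h1 := abs_add_le (γ b₂ - τ - φ (b, τ) * (ε*(σ₂ - σ)))
        ((φ (b, τ) - Φ) * (ε*(σ₂-σ)) + (τ - t - Φ*(ε*σ)))
      have h2 := abs_add_le ((φ (b, τ) - Φ) * (ε*(σ₂-σ))) (τ - t - Φ*(ε*σ))
      have h3 : |(φ (b, τ) - Φ) * (ε*(σ₂-σ))| = |φ (b, τ) - Φ| * (σ₂ - σ) := by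
        rw [abs_mul, abs_mul, hε1, one_mul,
          abs_of_nonneg (by linarith only [hσ₂gt] : (0:ℝ) ≤ σ₂ - σ)]
      have h4 : |φ (b, τ) - Φ| * (σ₂ - σ) ≤ W*σ * (σ₂ - σ) :=
        mul_le_mul_of_nonneg_right hφτ (by linarith only [hσ₂gt])
      have hpos : 0 ≤ W*σ*(σ₂ - σ) :=
        mul_nonneg (mul_nonneg hW hσIcc.1) (by linarith only [hσ₂gt])
      rw [e1]
      linarith only [hMVT, hdr, h1, h2, h3, h4, hpos]
    have hγb₂t : |γ b₂ - t| ≤ W*σ₂^2 + M*σ₂ := by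
      have e1 : γ b₂ - t = (γ b₂ - t - Φ*(ε*σ₂)) + Φ*(ε*σ₂) := by ring
      have h1 := abs_add_le (γ b₂ - t - Φ*(ε*σ₂)) (Φ*(ε*σ₂))
      have h6 : |Φ*(ε*σ₂)| = |Φ| *σ₂ := by
        rw [abs_mul, abs_mul, hε1, one_mul, abs_of_nonneg hσ₂0]
      have h7 : |Φ| *σ₂ ≤ M*σ₂ := mul_le_mul_of_nonneg_right hΦM hσ₂0
      calc |γ b₂ - t| = |(γ b₂ - t - Φ*(ε*σ₂)) + Φ*(ε*σ₂)| := by rw [← e1]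
        _ ≤ W*σ₂^2 + M*σ₂ := by linarith only [h1, hdrnew, h6, h7]
    have hballnew : (b₂, γ b₂) ∈ Metric.closedBall A ρ := by
      apply hcbmem
      · show |b₂ - A.1| ≤ ρ
        have e : b₂ - A.1 = (z - A.1) + ε*σ₂ := by rw [hb₂def]; ring
        have h1 : |b₂ - A.1| ≤ |z - A.1| + |ε*σ₂| := by rw [e]; exact abs_add_le _ _
        have h2 : |ε*σ₂| = σ₂ := by rw [abs_mul, hε1, one_mul, abs_of_nonneg hσ₂0]
        linarith only [hz1n, h1, h2, hσ₂2r, hrρ3]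
      · show |γ b₂ - A.2| ≤ ρ
        have h1 : |γ b₂ - A.2| ≤ |γ b₂ - t| + |t - A.2| := by
          have e : γ b₂ - A.2 = (γ b₂ - t) + (t - A.2) := by ring
          rw [e]; exact abs_add_le _ _
        have hp1 : 0 ≤ W*r*(ρ - r) := mul_nonneg (mul_nonneg hW (le_of_lt hrpos))
          (by linarith only [hrρ])
        have hp2 : 0 ≤ W*(2*r - σ₂)*(2*r + σ₂) :=
          mul_nonneg (mul_nonneg hW (by linarith only [hσ₂2r]))
            (by linarith only [hσ₂2r, hσ₂0, hrpos])
        have hp3 : 0 ≤ M*(2*r - σ₂) := mul_nonneg hM0 (by linarith only [hσ₂2r])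
        linarith only [h1, hγb₂t, ht1n, hp1, hp2, hp3, hrdeneq, hrpos]
    have hKnew : (σ₂, γ b₂) ∈ K :=
      (hKmem σ₂ (γ b₂)).2 ⟨⟨hσ₂0, hσ₂le⟩, hballnew, hφnew, hdrnew⟩
    have hσ₂S : σ₂ ∈ Prod.fst '' K := ⟨(σ₂, γ b₂), hKnew, rfl⟩
    have hcon : σ₂ ≤ σ := by rw [hq1']; exact le_csSup hSbdd hσ₂S
    linarith only [hcon, hσ₂gt]
  -- final assembly
  obtain ⟨⟨σu, τ''⟩, hq''K, hq''1⟩ := hfin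
  have hσu : σu = u := hq''1
  obtain ⟨hIcc'', hcb'', hφ'', hdr''⟩ := (hKmem σu τ'').1 hq''K
  rw [hσu] at hcb'' hφ'' hdr''
  rw [hεu] at hcb'' hφ''
  have hεu2 : ε * u = z' - z := by linarith only [hεu]
  rw [hεu2] at hdr''
  have hB''ω : (z', τ'') ∈ ω := hsub hcb''
  have hhh : |φ (z', τ'') - φ (z', t')| ≤ C * Real.sqrt |τ'' - t'| :=
    hhold (z', τ'') hB''ω (z', t') hB'ω rfl
  set x : ℝ := |Φ - φ (z', t')| with hxdef
  set E : ℝ := |t' - t - (Φ + φ (z', t')) / 2 * (z' - z)| with hEdef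
  have hx0 : 0 ≤ x := hxdef ▸ abs_nonneg _
  have hE0 : 0 ≤ E := hEdef ▸ abs_nonneg _
  have hstep1 : x ≤ W*u + C*Real.sqrt |τ'' - t'| := by
    have h1 := abs_sub_le Φ (φ (z', τ'')) (φ (z', t'))
    have h2 : |Φ - φ (z', τ'')| ≤ W*u := by rw [abs_sub_comm]; exact hφ''
    rw [hxdef]; linarith only [h1, h2, hhh]
  have h4 : |τ'' - t'| ≤ W*u^2 + (E + x/2*u) := by
    have e : τ'' - t' = (τ'' - t - Φ*(z' - z)) +
        (-(t' - t - (Φ + φ (z', t'))/2*(z' - z)) + ((Φ - φ (z', t'))/2)*(z' - z)) := by ring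
    have h1 := abs_add_le (τ'' - t - Φ*(z' - z))
      (-(t' - t - (Φ + φ (z', t'))/2*(z' - z)) + ((Φ - φ (z', t'))/2)*(z' - z))
    have h2 := abs_add_le (-(t' - t - (Φ + φ (z', t'))/2*(z' - z)))
      (((Φ - φ (z', t'))/2)*(z' - z))
    have h3 : |(-(t' - t - (Φ + φ (z', t'))/2*(z' - z)))| = E := by rw [abs_neg, hEdef]
    have h5 : |((Φ - φ (z', t'))/2)*(z' - z)| = x/2*u := by
      rw [abs_mul, abs_div, abs_two, ← hxdef, ← hudef]
    rw [e]
    linarith only [h1, h2, h3, h5, hdr'']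
  have h5s : Real.sqrt |τ'' - t'| ≤
      Real.sqrt W * u + (Real.sqrt E + Real.sqrt (x/2) * Real.sqrt u) := by
    have s1 : Real.sqrt |τ'' - t'| ≤ Real.sqrt (W*u^2 + (E + x/2*u)) := Real.sqrt_le_sqrt h4
    have hxu : 0 ≤ x/2*u := mul_nonneg (by linarith only [hx0]) hu0
    have s2 := my_sqrt_add_le (W*u^2) (E + x/2*u) (mul_nonneg hW (sq_nonneg u))
      (by linarith only [hE0, hxu])
    have s3 := my_sqrt_add_le E (x/2*u) hE0 hxu
    have s4 : Real.sqrt (W*u^2) = Real.sqrt W * u := by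
      rw [Real.sqrt_mul hW, Real.sqrt_sq hu0]
    have s5 : Real.sqrt (x/2*u) = Real.sqrt (x/2) * Real.sqrt u :=
      Real.sqrt_mul (by linarith only [hx0]) u
    rw [s4] at s2; rw [s5] at s3
    linarith only [s1, s2, s3]
  have h7 : C*(Real.sqrt (x/2) * Real.sqrt u) ≤ x/4 + C^2*u/2 := by
    have h := my_amgm C (Real.sqrt (x/2)) (Real.sqrt u)
    rw [Real.sq_sqrt (show (0:ℝ) ≤ x/2 by linarith only [hx0]), Real.sq_sqrt hu0] at h
    linarith only [h]
  have h8 : x ≤ W*u + C*(Real.sqrt W * u + (Real.sqrt E + Real.sqrt (x/2) * Real.sqrt u)) := by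
    have hm := mul_le_mul_of_nonneg_left h5s hC
    linarith only [hstep1, hm]
  have c1le : (4:ℝ)/3*(W + C*Real.sqrt W + C^2/2) ≤ L := by
    rw [hLdef]; linarith only [hC]
  have c2le : (4:ℝ)/3*C ≤ L := by
    rw [hLdef]; linarith only [hW, mul_nonneg hC (Real.sqrt_nonneg W), sq_nonneg C]
  have hfinal : x ≤ L*u + L*Real.sqrt E := by
    have m1 := mul_le_mul_of_nonneg_right c1le hu0
    have m2 := mul_le_mul_of_nonneg_right c2le (Real.sqrt_nonneg E)
    linarith only [h7, h8, m1, m2]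
  linarith only [hfinal]
end
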